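/- arXiv:2301.12584 — 2 statements merged into one kernel-verified Lean document; each statement's English description precedes it below -/
import Mathlib

section
/- Let U1,...,UN with Uj ∈ ℝ^{Ij×R}, and let A = U1 ⊙ ... ⊙ UN. Fix k ∈ [N], indices s1,...,sk with sa ∈ [Ia], set h = ∘_{a=1}^{k-1} Ua[sa,:]ᵀ ∈ ℝ^R and G_{>k} = G⁺ ∘ ∘_{a=k+1}^N (UaᵀUa) where G = AᵀA. Then the sum over all (i_{k+1},...,i_N) of the leverage scores ℓ_{s1,...,sk,i_{k+1},...,i_N} equals ⟨ h hᵀ, Uk[sk,:]ᵀ Uk[sk,:], G_{>k} ⟩, the sum of entries of the entrywise product of the three R×R matrices. -/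
open Matrix

/-- `P` is the Moore-Penrose pseudoinverse of `M`. -/
def IsMoorePenrose {n m : ℕ} (M : Matrix (Fin n) (Fin m) ℝ) (P : Matrix (Fin m) (Fin n) ℝ) : Prop :=
  M * P * M = M ∧ P * M * P = P ∧ (M * P)ᵀ = M * P ∧ (P * M)ᵀ = P * M

/-- Khatri-Rao product of `N` matrices `U j : I j × R`, with rows indexed by tuples. -/
def krp {N R : ℕ} {I : Fin N → ℕ} (U : ∀ j, Matrix (Fin (I j)) (Fin R) ℝ) :
    Matrix (∀ j, Fin (I j)) (Fin R) ℝ :=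
  Matrix.of fun i r => ∏ j, U j (i j) r

lemma sum_filter_prod_helper {N : ℕ} {I : Fin N → ℕ} (k : Fin N) (s : ∀ j, Fin (I j))
    (g : ∀ j, Fin (I j) → ℝ) :
    ∑ t ∈ Finset.univ.filter (fun t : ∀ j, Fin (I j) => ∀ a ≤ k, t a = s a),
        ∏ j, g j (t j)
      = (∏ a ∈ Finset.univ.filter (fun a => a < k), g a (s a)) * g k (s k) *
        ∏ a ∈ Finset.univ.filter (fun a => k < a), (∑ i, g a i) := by
  have hset : Finset.univ.filter (fun t : ∀ j, Fin (I j) => ∀ a ≤ k, t a = s a)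
      = Fintype.piFinset (fun j => if j ≤ k then {s j} else Finset.univ) := by
    ext t
    simp only [Finset.mem_filter, Finset.mem_univ, true_and, Fintype.mem_piFinset]
    constructor
    · intro h j
      by_cases hj : j ≤ k <;> simp [hj, h]
    · intro h a ha
      have := h a
      simpa [ha] using this
  rw [hset, ← Finset.prod_univ_sum]
  have hterm : ∀ j, (∑ i ∈ (if j ≤ k then ({s j} : Finset (Fin (I j))) else Finset.univ), g j i)
      = if j ≤ k then g j (s j) else ∑ i, g j i := by
    intro j; by_cases hj : j ≤ k <;> simp [hj]
  simp only [hterm]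
  rw [Finset.prod_ite]
  have hle : Finset.univ.filter (fun a : Fin N => a ≤ k)
      = insert k (Finset.univ.filter (fun a => a < k)) := by
    ext a
    simp only [Finset.mem_filter, Finset.mem_univ, true_and, Finset.mem_insert]
    constructor
    · intro ha; rcases lt_or_eq_of_le ha with h' | h'
      · exact Or.inr h'
      · exact Or.inl h'
    · rintro (rfl | ha)
      · exact le_refl _
      · exact le_of_lt ha
  have hnot : Finset.univ.filter (fun a : Fin N => ¬ a ≤ k)
      = Finset.univ.filter (fun a => k < a) := by
    ext a; simp [not_le]
  rw [hle, hnot, Finset.prod_insert (by simp)]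
  ring

/-- Marginalization identity: the sum over all tail indices `(i_{k+1},...,i_N)` of the
leverage scores `ℓ_{s1,...,sk,i_{k+1},...,i_N}` equals the generalized inner product
`⟨ h hᵀ, Uk[sk,:]ᵀ Uk[sk,:], G_{>k} ⟩`, where `h = ∘_{a<k} Ua[sa,:]ᵀ` and
`G_{>k} = G⁺ ∘ ∘_{a>k} (UaᵀUa)`. -/
theorem krp_leverage_marginalization {N R : ℕ} {I : Fin N → ℕ}
    (U : ∀ j, Matrix (Fin (I j)) (Fin R) ℝ)
    (Gplus : Matrix (Fin R) (Fin R) ℝ)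
    (hG : IsMoorePenrose ((krp U)ᵀ * krp U) Gplus)
    (k : Fin N) (s : ∀ j, Fin (I j))
    (h : Fin R → ℝ) (hh : h = fun r => ∏ a ∈ Finset.univ.filter (fun a => a < k), U a (s a) r)
    (Ggt : Matrix (Fin R) (Fin R) ℝ)
    (hGgt : Ggt = Matrix.of fun r c =>
      Gplus r c * ∏ a ∈ Finset.univ.filter (fun a => k < a), ((U a)ᵀ * U a) r c) :
    ∑ t ∈ Finset.univ.filter (fun t : ∀ j, Fin (I j) => ∀ a ≤ k, t a = s a),
        krp U t ⬝ᵥ Gplus *ᵥ krp U t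
      = ∑ r, ∑ c, (h r * h c) * (U k (s k) r * U k (s k) c) * Ggt r c := by
  subst hh hGgt
  have expand : ∀ t : ∀ j, Fin (I j),
      krp U t ⬝ᵥ Gplus *ᵥ krp U t
        = ∑ r, ∑ c, Gplus r c * ∏ j, (U j (t j) r * U j (t j) c) := by
    intro t
    simp only [dotProduct, mulVec, krp, Matrix.of_apply, Finset.mul_sum,
      Finset.prod_mul_distrib]
    refine Finset.sum_congr rfl fun r _ => Finset.sum_congr rfl fun c _ => ?_
    ring
  simp only [expand]
  rw [Finset.sum_comm]
  refine Finset.sum_congr rfl fun r _ => ?_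
  rw [Finset.sum_comm]
  refine Finset.sum_congr rfl fun c _ => ?_
  rw [← Finset.mul_sum, sum_filter_prod_helper k s (fun j i => U j i r * U j i c)]
  simp only [Matrix.of_apply, Matrix.mul_apply, Matrix.transpose_apply,
    Finset.prod_mul_distrib]
  ring
end

section
/- With A = U1 ⊙ ... ⊙ UN a nonzero matrix and notation as in the conditional-distribution lemma, the normalization constant for the first draw (k = 1) equals the rank of A: ⟨G1, G_{>1}⟩ = rank(A), where G1 = U1ᵀU1 and G_{>1} = G⁺ ∘ ∘_{a=2}^N (UaᵀUa). In particular this constant is nonzero. -/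
/-!
Entrywise `G = ∘_j UjᵀUj`, so `⟨G1, G_{>1}⟩ = ∑_{r,c} G⁺[r,c] G[r,c] = tr(G⁺G)` by symmetry
of `G`. From `G G⁺ G = G`, the matrix `G⁺G` is idempotent and has the rank of `G = AᵀA`, which
is the rank of `A`; and the trace of an idempotent matrix is its rank.
-/

open Matrix

namespace Matrix

section Field

variable {K : Type*} [Field K]

theorem trace_eq_rank_of_isIdempotentElem {n : Type*} [Fintype n] [DecidableEq n]
    {E : Matrix n n K} (h : IsIdempotentElem E) : E.trace = E.rank := by
  have hE : IsIdempotentElem (toLin' E) := h.map toLinAlgEquiv'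
  rw [← trace_toLin'_eq, (LinearMap.IsIdempotentElem.isProj_range _ hE).trace, rank,
    toLin'_apply']

theorem rank_ne_zero_of_ne_zero {m n : Type*} [Fintype m] [Fintype n] {A : Matrix m n K}
    (hA : A ≠ 0) : A.rank ≠ 0 := by
  classical
  rw [rank, ← toLin'_apply', Ne, Submodule.finrank_eq_zero, LinearMap.range_eq_bot,
    LinearEquiv.map_eq_zero_iff]
  exact hA

end Field

section InnerInverse

variable {R : Type*} [CommRing R] {m n : Type*} [Fintype m] [Fintype n]
  {M : Matrix m n R} {P : Matrix n m R}

theorem isIdempotentElem_mul_of_mul_mul_eq_self (h : M * P * M = M) :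
    IsIdempotentElem (P * M) := by
  rw [IsIdempotentElem, Matrix.mul_assoc, ← Matrix.mul_assoc M, h]

theorem rank_mul_of_mul_mul_eq_self [StrongRankCondition R] (h : M * P * M = M) :
    (P * M).rank = M.rank := by
  refine le_antisymm (rank_mul_le_right P M) ?_
  calc M.rank = (M * (P * M)).rank := by rw [← Matrix.mul_assoc, h]
    _ ≤ (P * M).rank := rank_mul_le_right _ _

end InnerInverse

theorem sum_sum_mul_eq_trace_mul_of_isSymm {R : Type*} [CommSemiring R] {n : Type*} [Fintype n]
    (P : Matrix n n R) {G : Matrix n n R} (hG : G.IsSymm) :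
    ∑ r, ∑ c, P r c * G r c = (P * G).trace := by
  simp only [trace, diag, mul_apply]
  refine Finset.sum_congr rfl fun r _ => Finset.sum_congr rfl fun c _ => ?_
  rw [hG.apply c r]

end Matrix

theorem krp_transpose_mul_self_apply {N R : ℕ} {I : Fin N → ℕ}
    (U : ∀ j, Matrix (Fin (I j)) (Fin R) ℝ) (r c : Fin R) :
    ((krp U)ᵀ * krp U) r c = ∏ j, ((U j)ᵀ * U j) r c := by
  simp only [mul_apply, transpose_apply, krp, of_apply, ← Finset.prod_mul_distrib]
  exact (Fintype.prod_sum fun j x => U j x r * U j x c).symm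

/-- For a nonzero Khatri-Rao product `A = U1 ⊙ ... ⊙ UN`, the normalization constant of the
first conditional draw equals the rank of `A`: `⟨G1, G_{>1}⟩ = rank A`, where
`G1 = U1ᵀU1` and `G_{>1} = G⁺ ∘ ∘_{a≥2} (UaᵀUa)`.  In particular it is nonzero. -/
theorem first_normalization_eq_rank {N R : ℕ} {I : Fin (N + 1) → ℕ}
    (U : ∀ j, Matrix (Fin (I j)) (Fin R) ℝ)
    (Gplus : Matrix (Fin R) (Fin R) ℝ)
    (hG : IsMoorePenrose ((krp U)ᵀ * krp U) Gplus)
    (hA : krp U ≠ 0)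
    (Ggt : Matrix (Fin R) (Fin R) ℝ)
    (hGgt : Ggt = Matrix.of fun r c =>
      Gplus r c * ∏ a ∈ Finset.univ.filter (fun a : Fin (N + 1) => a ≠ 0), ((U a)ᵀ * U a) r c) :
    (∑ r, ∑ c, ((U 0)ᵀ * U 0) r c * Ggt r c = ((krp U).rank : ℝ)) ∧
      (∑ r, ∑ c, ((U 0)ᵀ * U 0) r c * Ggt r c ≠ 0) := by
  have hsum : ∑ r, ∑ c, ((U 0)ᵀ * U 0) r c * Ggt r c =
      ∑ r, ∑ c, Gplus r c * ((krp U)ᵀ * krp U) r c := by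
    refine Finset.sum_congr rfl fun r _ => Finset.sum_congr rfl fun c _ => ?_
    rw [hGgt, of_apply, krp_transpose_mul_self_apply, Finset.filter_ne',
      ← Finset.mul_prod_erase _ _ (Finset.mem_univ 0)]
    ring
  have hsymm : ((krp U)ᵀ * krp U).IsSymm := by
    rw [IsSymm, transpose_mul, transpose_transpose]
  have hrank : ∑ r, ∑ c, ((U 0)ᵀ * U 0) r c * Ggt r c = (krp U).rank := by
    rw [hsum, sum_sum_mul_eq_trace_mul_of_isSymm Gplus hsymm,
      trace_eq_rank_of_isIdempotentElem (isIdempotentElem_mul_of_mul_mul_eq_self hG.1),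
      rank_mul_of_mul_mul_eq_self hG.1, rank_transpose_mul_self]
  exact ⟨hrank, hrank ▸ Nat.cast_ne_zero.mpr (rank_ne_zero_of_ne_zero hA)⟩
end
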